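/- arXiv:2505.22136 — 3 statements merged into one kernel-verified Lean document; each statement's English description precedes it below -/
import Mathlib

section
/- Let μ be a Borel probability measure on ℝ and suppose there exists C > 0 such that |μ̂(ξ)| ≤ C|ξ|^{-1} for all ξ ∈ ℝ \ {0}. If a countable set Λ ⊂ ℝ, enumerated in increasing order as Λ = {λ_k : k ∈ ℤ}, satisfies the lower frame inequality ∑_{λ∈Λ} |∫ f(x) e^{-2πiλx} dμ(x)|² ≥ A ∫ |f(x)|² dμ(x) for all f ∈ L²(μ) and some A > 0, then g_min(Λ) · g_max(Λ) ≤ C²π²/A. -/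
open MeasureTheory Filter Set
open scoped Real

/-- The essential minimal spectral gap of an increasing enumeration `lam : ℤ → ℝ`:
`inf {c ≥ 0 : g_k < c for infinitely many k}` where `g_k = lam k - lam (k-1)`. -/
noncomputable def gmin (lam : ℤ → ℝ) : ℝ :=
  sInf {c : ℝ | 0 ≤ c ∧ {k : ℤ | lam k - lam (k - 1) < c}.Infinite}

/-- The essential maximal spectral gap of an increasing enumeration `lam : ℤ → ℝ`:
`sup {c ≥ 0 : g_k > c for infinitely many k}` where `g_k = lam k - lam (k-1)`. -/
noncomputable def gmax (lam : ℤ → ℝ) : ℝ :=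
  sSup {c : ℝ | 0 ≤ c ∧ {k : ℤ | c < lam k - lam (k - 1)}.Infinite}

/-- The Fourier transform of a measure on `ℝ`: `μ̂(ξ) = ∫ e^{-2πiξx} dμ(x)`. -/
noncomputable def muHat (μ : Measure ℝ) (ξ : ℝ) : ℂ :=
  ∫ x, Complex.exp ((-2 * π * ξ * x : ℝ) * Complex.I) ∂μ

open Function
open scoped Topology

/-!
Testing the lower frame inequality against `f(x) = e^{2πitx}` gives
`A ≤ ∑_k |μ̂(λ_k - t)|² ≤ C² ∑_k (λ_k - t)⁻²` for every `t ∉ Λ`. Fix `0 < c < g_min` and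
`0 < d < g_max`: only finitely many gaps are shorter than `c`, and infinitely many are longer
than `d`, say towards `+∞` (otherwise reflect `Λ`). Centre `t` in such a gap `g`, far to the
right. On each side of `t` the `n`-th point of `Λ` is then at distance at least `g/2 + nc`, except
beyond the finitely many short gaps, where the contribution is as small as we like. Since
`∑_n (s + n)⁻² ≤ π² / (4s)` for `s ≥ 1/2`, each side contributes at most `π² / (2gc)`, hence
`A ≤ C²π² / (cd)`.
-/

lemma hasSum_one_div_two_mul_add_one_sq :
    HasSum (fun n : ℕ => 1 / (2 * (n : ℝ) + 1) ^ 2) (π ^ 2 / 8) := by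
  have hzeta := hasSum_zeta_two
  have heven : HasSum (fun n : ℕ => 1 / ((2 * n : ℕ) : ℝ) ^ 2) (π ^ 2 / 24) := by
    have h := hzeta.mul_left (1 / 4)
    rw [show 1 / 4 * (π ^ 2 / 6) = π ^ 2 / 24 by ring] at h
    exact h.congr_fun fun n => by push_cast; ring
  have hinj : Injective fun n : ℕ => 2 * n + 1 := fun a b h => by
    have : 2 * a + 1 = 2 * b + 1 := h
    omega
  have hodd : Summable (fun n : ℕ => 1 / ((2 * n + 1 : ℕ) : ℝ) ^ 2) :=
    hzeta.summable.comp_injective hinj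
  have htsum : π ^ 2 / 24 + ∑' n : ℕ, 1 / ((2 * n + 1 : ℕ) : ℝ) ^ 2 = π ^ 2 / 6 :=
    (heven.even_add_odd (f := fun n : ℕ => 1 / (n : ℝ) ^ 2) hodd.hasSum).unique hzeta
  have := hodd.hasSum
  rw [show ∑' n : ℕ, 1 / ((2 * n + 1 : ℕ) : ℝ) ^ 2 = π ^ 2 / 8 by linarith] at this
  exact this.congr_fun fun n => by push_cast; ring

lemma summable_one_div_add_sq (a : ℝ) : Summable (fun n : ℕ => 1 / (a + n) ^ 2) := by
  simpa [add_comm, sq_abs] using (Real.summable_one_div_nat_add_rpow a 2).mpr one_lt_two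

lemma tsum_one_div_add_sq_le_one_div_sub_half {a : ℝ} (ha : 1 / 2 < a) :
    ∑' n : ℕ, 1 / (a + n) ^ 2 ≤ 1 / (a - 1 / 2) := by
  set u : ℕ → ℝ := fun n => 1 / (a - 1 / 2 + n)
  have hterm : ∀ n : ℕ, 1 / (a + n) ^ 2 ≤ u n - u (n + 1) := by
    intro n
    have h₁ : 0 < a - 1 / 2 + n := by positivity
    have h₂ : 0 < a - 1 / 2 + (n + 1 : ℕ) := by positivity
    rw [show u n - u (n + 1) = 1 / ((a + n) ^ 2 - 1 / 4) by
      simp only [u]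
      rw [div_sub_div _ _ h₁.ne' h₂.ne']
      push_cast
      congr 1 <;> ring]
    exact one_div_le_one_div_of_le (by nlinarith) (by linarith)
  refine Real.tsum_le_of_sum_range_le (fun n => by positivity) fun n => ?_
  calc ∑ i ∈ Finset.range n, 1 / (a + i) ^ 2
      ≤ ∑ i ∈ Finset.range n, (u i - u (i + 1)) := Finset.sum_le_sum fun i _ => hterm i
    _ = u 0 - u n := Finset.sum_range_sub' u n
    _ ≤ u 0 := sub_le_self _ (by positivity)
    _ = 1 / (a - 1 / 2) := by simp [u]

/-- Sharp at `s = 1/2`, where the sum is `∑ 4 / (2n+1)^2 = π^2 / 2`. -/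
lemma tsum_one_div_add_sq_le_pi_sq {s : ℝ} (hs : 1 / 2 ≤ s) :
    ∑' n : ℕ, 1 / (s + n) ^ 2 ≤ π ^ 2 / (4 * s) := by
  have hs₀ : 0 < s := by linarith
  set T := ∑' n : ℕ, 1 / (s + 1 + n) ^ 2
  have hsplit : ∑' n : ℕ, 1 / (s + n) ^ 2 = 1 / s ^ 2 + T := by
    rw [(summable_one_div_add_sq s).tsum_eq_zero_add]
    simp only [Nat.cast_zero, add_zero, Nat.cast_succ, T, add_assoc, add_comm (1 : ℝ)]
  have htel : T ≤ 1 / (s + 1 / 2) := by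
    convert tsum_one_div_add_sq_le_one_div_sub_half (a := s + 1) (by linarith) using 2; ring
  -- `4sT = 2T + (4s - 2)T`: compare `2T` termwise with the terms `n ≥ 1` of
  -- `∑ 8 / (2n+1)^2 = π^2`, and bound `T` by telescoping
  have hodd : HasSum (fun n : ℕ => 8 / (2 * ((n + 1 : ℕ) : ℝ) + 1) ^ 2) (π ^ 2 - 8) := by
    have h8 := hasSum_one_div_two_mul_add_one_sq.mul_left 8
    rw [show 8 * (π ^ 2 / 8) = π ^ 2 by ring] at h8
    have := (hasSum_nat_add_iff' 1).mpr h8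
    norm_num at this
    exact this.congr_fun fun n => by push_cast; ring
  have h2T : 2 * T ≤ π ^ 2 - 8 := by
    rw [← tsum_mul_left]
    refine hasSum_le (fun n => ?_) ((summable_one_div_add_sq (s + 1)).mul_left 2).hasSum hodd
    rw [mul_one_div, div_le_div_iff₀ (by positivity) (by positivity)]
    push_cast
    nlinarith [mul_nonneg (by linarith : (0 : ℝ) ≤ 2 * (s + 1 + n) - (2 * (n + 1) + 1))
      (by positivity : (0 : ℝ) ≤ 2 * (s + 1 + n) + (2 * (n + 1) + 1))]
  rw [hsplit, le_div_iff₀ (by positivity)]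
  have hT₀ : 0 ≤ T := tsum_nonneg fun n => by positivity
  have hkey : 4 / s + (4 * s - 2) / (s + 1 / 2) ≤ 8 := by
    rw [div_add_div _ _ hs₀.ne' (by positivity : (0 : ℝ) < s + 1 / 2).ne',
      div_le_iff₀ (by positivity)]
    nlinarith
  calc (1 / s ^ 2 + T) * (4 * s) = 4 / s + 2 * T + (4 * s - 2) * T := by field_simp; ring
    _ ≤ 4 / s + (π ^ 2 - 8) + (4 * s - 2) * (1 / (s + 1 / 2)) := by
      gcongr; linarith
    _ ≤ π ^ 2 := by rw [mul_one_div]; linarith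

lemma summable_one_div_add_mul_sq (a : ℝ) {c : ℝ} (hc : c ≠ 0) :
    Summable (fun n : ℕ => 1 / (a + n * c) ^ 2) :=
  ((summable_one_div_add_sq (a / c)).mul_left (1 / c ^ 2)).congr fun n => by
    field_simp

lemma tsum_one_div_add_mul_sq_le {a c : ℝ} (hc : 0 < c) (hca : c ≤ 2 * a) :
    ∑' n : ℕ, 1 / (a + n * c) ^ 2 ≤ π ^ 2 / (4 * a * c) := by
  have hscale : ∀ n : ℕ, 1 / (a + n * c) ^ 2 = 1 / c ^ 2 * (1 / (a / c + n) ^ 2) := fun n => by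
    field_simp
  rw [tsum_congr hscale, tsum_mul_left]
  calc 1 / c ^ 2 * ∑' n : ℕ, 1 / (a / c + n) ^ 2 ≤ 1 / c ^ 2 * (π ^ 2 / (4 * (a / c))) := by
        gcongr
        exact tsum_one_div_add_sq_le_pi_sq (by rw [le_div_iff₀ hc]; linarith)
    _ = π ^ 2 / (4 * a * c) := by
        have : 0 < a := by linarith
        field_simp

lemma mul_le_sub_of_forall_le_sub {lam : ℤ → ℝ} {c : ℝ} {i j : ℤ} (hij : i ≤ j)
    (h : ∀ m, i < m → m ≤ j → c ≤ lam m - lam (m - 1)) :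
    ((j - i : ℤ) : ℝ) * c ≤ lam j - lam i := by
  induction j, hij using Int.leInduction with
  | base => simp
  | succ j hij ih =>
    have hj := h (j + 1) (by omega) le_rfl
    have := ih fun m hm hmj => h m hm (by omega)
    push_cast at this ⊢
    rw [add_sub_cancel_right] at hj
    linarith

lemma one_div_sq_le_one_div_sq_of_le_abs {a x : ℝ} (ha : 0 < a) (h : a ≤ |x|) :
    1 / x ^ 2 ≤ 1 / a ^ 2 := by
  rw [← sq_abs x]
  exact one_div_le_one_div_of_le (by positivity) (pow_le_pow_left₀ ha.le h 2)

section SpectralGaps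

variable {lam : ℤ → ℝ} {c : ℝ} {K k : ℤ}

lemma midpoint_notMem_range (hmono : StrictMono lam) (k : ℤ) :
    (lam (k - 1) + lam k) / 2 ∉ range lam := by
  rintro ⟨j, hj⟩
  have hk := hmono (sub_one_lt k)
  rcases le_or_gt j (k - 1) with h | h
  · linarith [hmono.monotone h]
  · linarith [hmono.monotone (show k ≤ j by omega)]

variable (hreg : ∀ m, K < |m| → c ≤ lam m - lam (m - 1))
include hreg

lemma le_sub_midpoint (hK : K < k) (n : ℕ) :
    (lam k - lam (k - 1)) / 2 + n * c ≤ lam (k + n) - (lam (k - 1) + lam k) / 2 := by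
  have := mul_le_sub_of_forall_le_sub (i := k) (j := k + n) (by omega) fun m hm _ =>
    hreg m ((show K < m by omega).trans_le (le_abs_self m))
  push_cast at this
  linarith

lemma le_midpoint_sub {n : ℕ} (hn : K ≤ k - 1 - n) :
    (lam k - lam (k - 1)) / 2 + n * c ≤ (lam (k - 1) + lam k) / 2 - lam (k - 1 - n) := by
  have := mul_le_sub_of_forall_le_sub (show k - 1 - n ≤ k - 1 by omega) fun m hm _ =>
    hreg m ((show K < m by omega).trans_le (le_abs_self m))
  push_cast at this
  linarith

lemma le_midpoint_sub_tail (hmono : StrictMono lam) (hc : 0 ≤ c) (hK : 0 ≤ K) (hk : K < k)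
    (n : ℕ) : ((k - 3 * K - 2 + n : ℤ) : ℝ) * c ≤ (lam (k - 1) + lam k) / 2 - lam (K - n) := by
  have hgap : 0 ≤ lam k - lam (k - 1) := sub_nonneg.mpr (hmono.monotone (by omega))
  have hnear := le_midpoint_sub (k := k) (n := (k - 1 - K).toNat) hreg (by omega)
  rw [show k - 1 - ((k - 1 - K).toNat : ℤ) = K by omega, show (((k - 1 - K).toNat : ℕ) : ℝ) =
    ((k - 1 - K : ℤ) : ℝ) by exact_mod_cast Int.toNat_of_nonneg (by omega)] at hnear
  rcases le_or_gt (-K - 1) (K - n) with hj | hj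
  · have : lam (K - n) ≤ lam K := hmono.monotone (by omega)
    have : ((k - 3 * K - 2 + n : ℤ) : ℝ) * c ≤ ((k - 1 - K : ℤ) : ℝ) * c :=
      mul_le_mul_of_nonneg_right (by exact_mod_cast (by omega : k - 3 * K - 2 + n ≤ k - 1 - K)) hc
    linarith
  · have hfar := mul_le_sub_of_forall_le_sub (show K - n ≤ -K - 1 by omega) fun m _ hm =>
      hreg m ((show K < -m by omega).trans_le (neg_le_abs m))
    have : lam (-K - 1) ≤ lam K := hmono.monotone (by omega)
    have : ((k - 3 * K - 2 + n : ℤ) : ℝ) * c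
        = ((k - 1 - K : ℤ) : ℝ) * c + ((-K - 1 - (K - n) : ℤ) : ℝ) * c := by push_cast; ring
    linarith

lemma one_div_sub_midpoint_sq_le (hmono : StrictMono lam) (hc : 0 < c) (hK : 0 ≤ K) {N : ℕ}
    (hN : 0 < N) (hk : 3 * K + 2 + N ≤ k) (j : ℤ) :
    1 / (lam j - (lam (k - 1) + lam k) / 2) ^ 2 ≤
      extend (fun n : ℕ => k + n) (fun n => 1 / ((lam k - lam (k - 1)) / 2 + n * c) ^ 2) 0 j +
      extend (fun n : ℕ => k - 1 - n) (fun n => 1 / ((lam k - lam (k - 1)) / 2 + n * c) ^ 2) 0 j +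
      extend (fun n : ℕ => K - n) (fun n => 1 / (N * c + n * c) ^ 2) 0 j := by
  set t := (lam (k - 1) + lam k) / 2
  set g := lam k - lam (k - 1)
  set q : ℕ → ℝ := fun n => 1 / (g / 2 + n * c) ^ 2
  set r : ℕ → ℝ := fun n => 1 / (N * c + n * c) ^ 2
  have hg₀ : 0 < g := hc.trans_le (hreg k ((show K < k by omega).trans_le (le_abs_self k)))
  have hq : 0 ≤ q := fun n => by positivity
  have hr : 0 ≤ r := fun n => by positivity
  have hinj₁ : Injective fun n : ℕ => k + n := fun a b h => by simpa using h
  have hinj₂ : Injective fun n : ℕ => k - 1 - n := fun a b h => by simpa using h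
  have hinj₃ : Injective fun n : ℕ => K - n := fun a b h => by simpa using h
  have hE₁ : ∀ j, 0 ≤ extend (fun n : ℕ => k + n) q 0 j := extend_nonneg hq le_rfl
  have hE₂ : ∀ j, 0 ≤ extend (fun n : ℕ => k - 1 - n) q 0 j := extend_nonneg hq le_rfl
  have hE₃ : ∀ j, 0 ≤ extend (fun n : ℕ => K - n) r 0 j := extend_nonneg hr le_rfl
  rcases le_or_gt k j with hkj | hjk
  · obtain ⟨n, rfl⟩ : ∃ n : ℕ, j = k + n := ⟨(j - k).toNat, by omega⟩
    have := one_div_sq_le_one_div_sq_of_le_abs (by positivity)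
      ((le_sub_midpoint hreg (show K < k by omega) n).trans (le_abs_self _))
    have : extend (fun n : ℕ => k + n) q 0 (k + n) = q n :=
      hinj₁.extend_apply q 0 n
    linarith [hE₂ (k + n), hE₃ (k + n)]
  rcases le_or_gt K j with hKj | hjK
  · obtain ⟨n, rfl⟩ : ∃ n : ℕ, j = k - 1 - n := ⟨(k - 1 - j).toNat, by omega⟩
    have := one_div_sq_le_one_div_sq_of_le_abs (by positivity)
      (((le_midpoint_sub hreg hKj).trans (le_abs_self _)).trans_eq (abs_sub_comm _ _))
    have : extend (fun n : ℕ => k - 1 - n) q 0 (k - 1 - n) = q n :=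
      hinj₂.extend_apply q 0 n
    linarith [hE₁ (k - 1 - n), hE₃ (k - 1 - n)]
  · obtain ⟨n, rfl⟩ : ∃ n : ℕ, j = K - n := ⟨(K - j).toNat, by omega⟩
    have hdist : N * c + n * c ≤ t - lam (K - n) := by
      refine le_trans ?_ (le_midpoint_sub_tail hreg hmono hc.le hK (by omega) n)
      rw [← add_mul]
      exact mul_le_mul_of_nonneg_right (by exact_mod_cast (by omega)) hc.le
    have := one_div_sq_le_one_div_sq_of_le_abs (by positivity)
      ((hdist.trans (le_abs_self _)).trans_eq (abs_sub_comm _ _))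
    have : extend (fun n : ℕ => K - n) r 0 (K - n) = r n :=
      hinj₃.extend_apply r 0 n
    linarith [hE₁ (K - n), hE₂ (K - n)]

lemma tsum_one_div_sub_midpoint_sq_le (hmono : StrictMono lam) (hc : 0 < c) (hK : 0 ≤ K)
    {N : ℕ} (hN : 0 < N) (hk : 3 * K + 2 + N ≤ k) :
    Summable (fun j => 1 / (lam j - (lam (k - 1) + lam k) / 2) ^ 2) ∧
      ∑' j, 1 / (lam j - (lam (k - 1) + lam k) / 2) ^ 2 ≤
        π ^ 2 / ((lam k - lam (k - 1)) * c) + π ^ 2 / (4 * N * c ^ 2) := by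
  have hfE := one_div_sub_midpoint_sq_le hreg hmono hc hK hN hk
  set g := lam k - lam (k - 1)
  set q : ℕ → ℝ := fun n => 1 / (g / 2 + n * c) ^ 2
  set r : ℕ → ℝ := fun n => 1 / (N * c + n * c) ^ 2
  have hg : c ≤ g := hreg k ((show K < k by omega).trans_le (le_abs_self k))
  have hNc : c ≤ 2 * (N * c) := by
    have : (1 : ℝ) ≤ N := by exact_mod_cast hN
    nlinarith
  have hE : HasSum (fun j => extend (fun n : ℕ => k + n) q 0 j +
      extend (fun n : ℕ => k - 1 - n) q 0 j + extend (fun n : ℕ => K - n) r 0 j)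
      (∑' n, q n + ∑' n, q n + ∑' n, r n) := by
    have hq := (summable_one_div_add_mul_sq (g / 2) hc.ne').hasSum
    have hr := (summable_one_div_add_mul_sq (N * c) hc.ne').hasSum
    exact (((hasSum_extend_zero fun a b h => by simpa using h).mpr hq).add
      ((hasSum_extend_zero fun a b h => by simpa using h).mpr hq)).add
      ((hasSum_extend_zero fun a b h => by simpa using h).mpr hr)
  have hfs := hE.summable.of_nonneg_of_le (fun j => by positivity) hfE
  refine ⟨hfs, (hasSum_le hfE hfs.hasSum hE).trans ?_⟩
  have hqle := tsum_one_div_add_mul_sq_le hc (show c ≤ 2 * (g / 2) by linarith)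
  have hrle := tsum_one_div_add_mul_sq_le hc hNc
  calc ∑' n, q n + ∑' n, q n + ∑' n, r n
      ≤ π ^ 2 / (4 * (g / 2) * c) + π ^ 2 / (4 * (g / 2) * c) + π ^ 2 / (4 * (N * c) * c) := by
        gcongr
    _ = π ^ 2 / (g * c) + π ^ 2 / (4 * N * c ^ 2) := by
        have : 0 < g := hc.trans_le hg
        field_simp
        ring

end SpectralGaps

def InvSqSumLowerBound (A B : ℝ) (lam : ℤ → ℝ) : Prop :=
  ∀ t ∉ range lam, Summable (fun j => 1 / (lam j - t) ^ 2) → A ≤ B * ∑' j, 1 / (lam j - t) ^ 2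

lemma InvSqSumLowerBound.comp_neg {A B : ℝ} {lam : ℤ → ℝ} (h : InvSqSumLowerBound A B lam) :
    InvSqSumLowerBound A B (fun j => -lam (-j)) := by
  intro t ht hs
  have ht' : -t ∉ range lam := by
    rintro ⟨j, hj⟩
    exact ht ⟨-j, by simp [hj]⟩
  have hterm : ∀ j, 1 / (-lam (-j) - t) ^ 2 = 1 / (lam (-j) - -t) ^ 2 := fun j => by ring
  simp only [hterm] at hs ⊢
  have hsum := (Equiv.neg ℤ).summable_iff (f := fun j => 1 / (lam j - -t) ^ 2)
  have htsum := (Equiv.neg ℤ).tsum_eq (fun j => 1 / (lam j - -t) ^ 2)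
  simp only [Function.comp_def, Equiv.neg_apply] at hsum htsum
  rw [htsum]
  exact h (-t) ht' (hsum.mp hs)

lemma le_mul_pi_sq_div_of_gaps {A B c d : ℝ} {lam : ℤ → ℝ} {K : ℤ} (hmono : StrictMono lam)
    (hc : 0 < c) (hd : 0 < d) (hK : 0 ≤ K) (hreg : ∀ m, K < |m| → c ≤ lam m - lam (m - 1))
    (hbig : ∀ M, ∃ k, M < k ∧ d < lam k - lam (k - 1)) (hB : 0 ≤ B)
    (hP : InvSqSumLowerBound A B lam) : A ≤ B * (π ^ 2 / (c * d)) := by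
  have hN : ∀ N : ℕ, 0 < N → A ≤ B * (π ^ 2 / (c * d)) + B * (π ^ 2 / (4 * c ^ 2)) / N := by
    intro N hN
    obtain ⟨k, hk, hgap⟩ := hbig (3 * K + 1 + N)
    obtain ⟨hs, hle⟩ := tsum_one_div_sub_midpoint_sq_le (k := k) hreg hmono hc hK hN (by omega)
    have hgd : π ^ 2 / ((lam k - lam (k - 1)) * c) ≤ π ^ 2 / (c * d) := by
      rw [mul_comm c d]
      gcongr
    calc A ≤ B * ∑' j, 1 / (lam j - (lam (k - 1) + lam k) / 2) ^ 2 :=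
          hP _ (midpoint_notMem_range hmono k) hs
      _ ≤ B * (π ^ 2 / (c * d) + π ^ 2 / (4 * N * c ^ 2)) := by gcongr; exact hle.trans (by gcongr)
      _ = B * (π ^ 2 / (c * d)) + B * (π ^ 2 / (4 * c ^ 2)) / N := by field_simp
  refine ge_of_tendsto ?_ (eventually_atTop.2 ⟨1, hN⟩)
  simpa using (tendsto_const_div_atTop_nhds_zero_nat (B * (π ^ 2 / (4 * c ^ 2)))).const_add
    (B * (π ^ 2 / (c * d)))

lemma gmin_nonneg (lam : ℤ → ℝ) : 0 ≤ gmin lam := Real.sInf_nonneg fun _ hc => hc.1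

lemma gmax_nonneg (lam : ℤ → ℝ) : 0 ≤ gmax lam := Real.sSup_nonneg fun _ hc => hc.1

lemma exists_forall_lt_abs_le_gap_of_lt_gmin {lam : ℤ → ℝ} {c : ℝ} (hc : 0 ≤ c)
    (h : c < gmin lam) : ∃ K : ℤ, 0 ≤ K ∧ ∀ m, K < |m| → c ≤ lam m - lam (m - 1) := by
  have hfin : {k : ℤ | lam k - lam (k - 1) < c}.Finite := by
    by_contra hinf
    have hmem : c ∈ {c : ℝ | 0 ≤ c ∧ {k : ℤ | lam k - lam (k - 1) < c}.Infinite} := ⟨hc, hinf⟩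
    exact (csInf_le ⟨0, fun _ hx => hx.1⟩ hmem).not_gt h
  obtain ⟨K, hK⟩ := (hfin.image abs).bddAbove
  refine ⟨max K 0, le_max_right _ _, fun m hm => ?_⟩
  by_contra! hlt
  have : |m| ≤ K := hK (mem_image_of_mem _ hlt)
  omega

lemma exists_lt_gap_of_lt_gmax {lam : ℤ → ℝ} {d : ℝ} (hd : 0 ≤ d) (h : d < gmax lam) :
    (∀ M, ∃ k, M < k ∧ d < lam k - lam (k - 1)) ∨ (∀ M, ∃ k, k < M ∧ d < lam k - lam (k - 1)) := by
  have hne : {c : ℝ | 0 ≤ c ∧ {k : ℤ | c < lam k - lam (k - 1)}.Infinite}.Nonempty := by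
    by_contra hemp
    rw [not_nonempty_iff_eq_empty] at hemp
    rw [gmax, hemp, Real.sSup_empty] at h
    linarith
  obtain ⟨x, ⟨-, hx⟩, hdx⟩ := exists_lt_of_lt_csSup hne h
  by_contra! hbdd
  obtain ⟨⟨M₁, h₁⟩, ⟨M₂, h₂⟩⟩ := hbdd
  refine hx ((finite_Icc M₂ M₁).subset fun k hk => ⟨?_, ?_⟩)
  · by_contra! hkM
    linarith [h₂ k hkM, show x < lam k - lam (k - 1) from hk]
  · by_contra! hkM
    linarith [h₁ k hkM, show x < lam k - lam (k - 1) from hk]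

lemma le_mul_pi_sq_div_of_lt_gmin_of_lt_gmax {A B c d : ℝ} {lam : ℤ → ℝ} (hmono : StrictMono lam)
    (hB : 0 ≤ B) (hP : InvSqSumLowerBound A B lam) (hc : 0 < c) (hcg : c < gmin lam)
    (hd : 0 < d) (hdg : d < gmax lam) : A ≤ B * (π ^ 2 / (c * d)) := by
  obtain ⟨K, hK, hreg⟩ := exists_forall_lt_abs_le_gap_of_lt_gmin hc.le hcg
  rcases exists_lt_gap_of_lt_gmax hd.le hdg with hbig | hbig
  · exact le_mul_pi_sq_div_of_gaps hmono hc hd hK hreg hbig hB hP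
  -- big gaps only accumulate at `-∞`: reflect the sequence
  have hgap : ∀ m : ℤ, -lam (-m) - -lam (-(m - 1)) = lam (1 - m) - lam (1 - m - 1) := fun m => by
    rw [show -(m - 1) = 1 - m by ring, show -m = 1 - m - 1 by ring]
    ring
  refine le_mul_pi_sq_div_of_gaps (K := K + 1) (fun i j hij => neg_lt_neg (hmono (by omega)))
    hc hd (by omega) (fun m hm => ?_) (fun M => ?_) hB hP.comp_neg
  · rw [hgap]
    exact hreg _ (by rw [lt_abs] at hm ⊢; omega)
  · obtain ⟨k, hk, hkd⟩ := hbig (1 - M)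
    exact ⟨1 - k, by omega, by rw [hgap, sub_sub_cancel]; exact hkd⟩

lemma mul_le_of_forall_lt_mul_le {x y B : ℝ} (hx : 0 ≤ x) (hy : 0 ≤ y) (hB : 0 ≤ B)
    (h : ∀ c d, 0 < c → c < x → 0 < d → d < y → c * d ≤ B) : x * y ≤ B := by
  rcases hx.eq_or_lt with rfl | hx
  · simpa using hB
  rcases hy.eq_or_lt with rfl | hy
  · simpa using hB
  have hlim : Tendsto (fun s : ℝ => s * x * (s * y)) (𝓝[<] 1) (𝓝 (x * y)) := by
    have : Continuous fun s : ℝ => s * x * (s * y) := by fun_prop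
    simpa using this.continuousWithinAt.tendsto (x := 1) (s := Iio 1)
  refine le_of_tendsto hlim ?_
  filter_upwards [Ioo_mem_nhdsLT zero_lt_one] with s hs
  exact h _ _ (by nlinarith [hs.1]) (mul_lt_of_lt_one_left hx hs.2) (by nlinarith [hs.1])
    (mul_lt_of_lt_one_left hy hs.2)

lemma integral_exp_mul_exp_eq_muHat (μ : Measure ℝ) (t ξ : ℝ) :
    ∫ x, Complex.exp ((2 * π * t * x : ℝ) * Complex.I) *
      Complex.exp ((-2 * π * ξ * x : ℝ) * Complex.I) ∂μ = muHat μ (ξ - t) := by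
  unfold muHat
  congr 1 with x
  rw [← Complex.exp_add]
  congr 1
  push_cast
  ring

lemma invSqSumLowerBound_of_frame (μ : Measure ℝ) [IsProbabilityMeasure μ] {A C : ℝ}
    (hdecay : ∀ ξ : ℝ, ξ ≠ 0 → ‖muHat μ ξ‖ ≤ C * |ξ|⁻¹) (lam : ℤ → ℝ)
    (hframe : ∀ f : ℝ → ℂ, MemLp f 2 μ →
      A * ∫ x, ‖f x‖ ^ 2 ∂μ ≤
        ∑' k : ℤ, ‖∫ x, f x * Complex.exp ((-2 * π * lam k * x : ℝ) * Complex.I) ∂μ‖ ^ 2) :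
    InvSqSumLowerBound A (C ^ 2) lam := by
  intro t ht hsum
  set f : ℝ → ℂ := fun x => Complex.exp ((2 * π * t * x : ℝ) * Complex.I)
  have hf : ∀ x, ‖f x‖ = 1 := fun x => Complex.norm_exp_ofReal_mul_I _
  have hfL2 : MemLp f 2 μ :=
    MemLp.of_bound (by fun_prop : Continuous f).aestronglyMeasurable 1
      (Eventually.of_forall fun x => (hf x).le)
  have hterm : ∀ k, ‖muHat μ (lam k - t)‖ ^ 2 ≤ C ^ 2 * (1 / (lam k - t) ^ 2) := fun k => by
    have hξ : lam k - t ≠ 0 := sub_ne_zero.mpr fun h => ht ⟨k, h⟩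
    calc ‖muHat μ (lam k - t)‖ ^ 2 ≤ (C * |lam k - t|⁻¹) ^ 2 :=
          pow_le_pow_left₀ (norm_nonneg _) (hdecay _ hξ) 2
      _ = C ^ 2 * (1 / (lam k - t) ^ 2) := by rw [mul_pow, inv_pow, sq_abs, one_div]
  have hCsum := hsum.mul_left (C ^ 2)
  calc A = A * ∫ x, ‖f x‖ ^ 2 ∂μ := by simp [hf]
    _ ≤ ∑' k : ℤ, ‖∫ x, f x * Complex.exp ((-2 * π * lam k * x : ℝ) * Complex.I) ∂μ‖ ^ 2 :=
      hframe f hfL2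
    _ = ∑' k : ℤ, ‖muHat μ (lam k - t)‖ ^ 2 := by
      simp only [f, integral_exp_mul_exp_eq_muHat]
    _ ≤ ∑' k : ℤ, C ^ 2 * (1 / (lam k - t) ^ 2) :=
      (hCsum.of_nonneg_of_le (fun k => by positivity) hterm).tsum_le_tsum hterm hCsum
    _ = C ^ 2 * ∑' k : ℤ, 1 / (lam k - t) ^ 2 := tsum_mul_left

theorem stmt0_general (μ : Measure ℝ) [IsProbabilityMeasure μ]
    (C : ℝ)
    (hdecay : ∀ ξ : ℝ, ξ ≠ 0 → ‖muHat μ ξ‖ ≤ C * |ξ|⁻¹)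
    (lam : ℤ → ℝ) (hmono : StrictMono lam)
    (A : ℝ) (hA : 0 < A)
    (hframe : ∀ f : ℝ → ℂ, MemLp f 2 μ →
      A * ∫ x, ‖f x‖ ^ 2 ∂μ ≤
        ∑' k : ℤ, ‖∫ x, f x * Complex.exp ((-2 * π * lam k * x : ℝ) * Complex.I) ∂μ‖ ^ 2) :
    gmin lam * gmax lam ≤ C ^ 2 * π ^ 2 / A := by
  have hP := invSqSumLowerBound_of_frame μ hdecay lam hframe
  refine mul_le_of_forall_lt_mul_le (gmin_nonneg lam) (gmax_nonneg lam) (by positivity)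
    fun c d hc hcg hd hdg => ?_
  have hcd := le_mul_pi_sq_div_of_lt_gmin_of_lt_gmax hmono (sq_nonneg C) hP hc hcg hd hdg
  rw [mul_div_assoc', le_div_iff₀ (by positivity)] at hcd
  rw [le_div_iff₀ hA]
  linarith

theorem stmt0 (μ : Measure ℝ) [IsProbabilityMeasure μ]
    (C : ℝ) (hC : 0 < C)
    (hdecay : ∀ ξ : ℝ, ξ ≠ 0 → ‖muHat μ ξ‖ ≤ C * |ξ|⁻¹)
    (lam : ℤ → ℝ) (hmono : StrictMono lam)
    (A : ℝ) (hA : 0 < A)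
    (hframe : ∀ f : ℝ → ℂ, MemLp f 2 μ →
      A * ∫ x, ‖f x‖ ^ 2 ∂μ ≤
        ∑' k : ℤ, ‖∫ x, f x * Complex.exp ((-2 * π * lam k * x : ℝ) * Complex.I) ∂μ‖ ^ 2) :
    gmin lam * gmax lam ≤ C ^ 2 * π ^ 2 / A :=
  stmt0_general μ C hdecay lam hmono A hA hframe
end

section
/- Let Λ ⊂ ℝ, enumerated in increasing order as Λ = {λ_k : k ∈ ℤ}, be a tight frame-spectrum of Lebesgue measure on [0,1], i.e. there exists A > 0 with ∑_{λ∈Λ} |∫_{[0,1]} f(x) e^{-2πiλx} dx|² = A ∫_{[0,1]} |f(x)|² dx for all f ∈ L²([0,1]). Then g_max(Λ) ≤ sup{g_k(Λ) : k ∈ ℤ} ≤ π² + 2. -/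
/-!
Testing the tight frame identity on the exponential `e^{2πiμx}` gives
`∑ₖ sinc(π(μ - λₖ))² = A` for every `μ ∈ ℝ`. Taking `μ = λ₀` gives `A ≥ 1`, and since
`sinc² ≥ 4/π²` on `[-π/2, π/2]`, no interval of length `1/2` contains more than
`N = ⌈Aπ²/4⌉` points of `Λ`; hence `λ_{j+mN} ≥ λⱼ + m/2`. If the gap `g = λₖ - λₖ₋₁` were
large, then at its midpoint `μ` the points of `Λ` would recede at least linearly in their index,
and the decay `sinc(x)² ≤ x⁻²` would make `∑ₖ sinc(π(μ - λₖ))²` of size `O(1/g² + N/g)`,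
less than `A` once `g > π² + 2`.
-/

open MeasureTheory Filter Set
open scoped Real

open Real

lemma sinc_sq_le_inv_sq {x : ℝ} (hx : x ≠ 0) : sinc x ^ 2 ≤ (x ^ 2)⁻¹ := by
  rw [sinc_of_ne_zero hx, div_pow, div_eq_mul_inv]
  exact mul_le_of_le_one_left (by positivity) (sin_sq_le_one x)

lemma sinc_sq_pi_mul_le {b d : ℝ} (hb : 0 < b) (hbd : b ≤ |d|) :
    sinc (π * d) ^ 2 ≤ (π ^ 2)⁻¹ * (b ^ 2)⁻¹ := by
  have hd : d ≠ 0 := abs_pos.mp (hb.trans_le hbd)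
  calc sinc (π * d) ^ 2 ≤ ((π * d) ^ 2)⁻¹ := sinc_sq_le_inv_sq (mul_ne_zero pi_ne_zero hd)
    _ ≤ (π ^ 2)⁻¹ * (b ^ 2)⁻¹ := by
      rw [mul_pow, mul_inv, ← sq_abs d]
      gcongr

lemma two_div_pi_le_sinc {x : ℝ} (hx : |x| ≤ π / 2) : 2 / π ≤ sinc x := by
  rcases eq_or_ne x 0 with rfl | hx0
  · rw [sinc_zero, div_le_one pi_pos]
    linarith [pi_gt_three]
  have habs : sinc x = sinc |x| := by
    rcases abs_choice x with h | h <;> rw [h]; simp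
  rw [habs, sinc_of_ne_zero (abs_ne_zero.mpr hx0), le_div_iff₀ (abs_pos.mpr hx0)]
  exact mul_le_sin (abs_nonneg x) hx

lemma integral_Icc_exp_two_pi_mul_I (t : ℝ) :
    ∫ x in Icc (0 : ℝ) 1, Complex.exp ((2 * π * t * x : ℝ) * Complex.I)
      = Complex.exp ((π * t : ℝ) * Complex.I) * sinc (π * t) := by
  rcases eq_or_ne t 0 with rfl | ht
  · simp
  have hπt : π * t ≠ 0 := mul_ne_zero pi_ne_zero ht
  have hc : ((2 * π * t : ℝ) : ℂ) * Complex.I ≠ 0 := by simp [pi_ne_zero, ht]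
  rw [integral_Icc_eq_integral_Ioc, ← intervalIntegral.integral_of_le zero_le_one]
  simp_rw [show ∀ x : ℝ, ((2 * π * t * x : ℝ) : ℂ) * Complex.I
      = ((2 * π * t : ℝ) : ℂ) * Complex.I * x from fun x => by push_cast; ring]
  rw [integral_exp_mul_complex hc, sinc_of_ne_zero hπt, Complex.ofReal_div, Complex.ofReal_sin,
    Complex.sin, neg_mul, Complex.exp_neg]
  have hsq : Complex.exp (((2 * π * t : ℝ) : ℂ) * Complex.I * 1)
      = Complex.exp ((π * t : ℝ) * Complex.I) ^ 2 := by
    rw [← Complex.exp_nat_mul]; push_cast; ring_nf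
  have hπt' : ((π * t : ℝ) : ℂ) ≠ 0 := by exact_mod_cast hπt
  rw [Complex.ofReal_one, Complex.ofReal_zero, hsq, mul_zero, Complex.exp_zero]
  push_cast at hπt' ⊢
  field_simp
  ring_nf
  rw [Complex.I_sq]
  ring

lemma norm_integral_Icc_exp_sq (t : ℝ) :
    ‖∫ x in Icc (0 : ℝ) 1, Complex.exp ((2 * π * t * x : ℝ) * Complex.I)‖ ^ 2
      = sinc (π * t) ^ 2 := by
  rw [integral_Icc_exp_two_pi_mul_I, norm_mul, Complex.norm_exp_ofReal_mul_I, one_mul,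
    Complex.norm_real, Real.norm_eq_abs, sq_abs]

lemma tsum_sinc_sq_eq_of_tight {lam : ℤ → ℝ} {A : ℝ}
    (htight : ∀ f : ℝ → ℂ, MemLp f 2 (volume.restrict (Icc (0 : ℝ) 1)) →
      (∑' k : ℤ,
          ‖∫ x in Icc (0 : ℝ) 1, f x * Complex.exp ((-2 * π * lam k * x : ℝ) * Complex.I)‖ ^ 2)
        = A * ∫ x in Icc (0 : ℝ) 1, ‖f x‖ ^ 2) (μ : ℝ) :
    ∑' k, sinc (π * (μ - lam k)) ^ 2 = A := by
  set e : ℝ → ℂ := fun x => Complex.exp ((2 * π * μ * x : ℝ) * Complex.I)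
  have he_norm : ∀ x, ‖e x‖ = 1 := fun x => Complex.norm_exp_ofReal_mul_I _
  have he : MemLp e 2 (volume.restrict (Icc (0 : ℝ) 1)) :=
    (memLp_top_of_bound (by fun_prop) 1 (.of_forall fun x => (he_norm x).le)).mono_exponent le_top
  have hmod : ∀ k x, e x * Complex.exp ((-2 * π * lam k * x : ℝ) * Complex.I)
      = Complex.exp ((2 * π * (μ - lam k) * x : ℝ) * Complex.I) := fun k x => by
    rw [← Complex.exp_add]; push_cast; ring_nf
  have h := htight e he
  simp only [hmod, norm_integral_Icc_exp_sq, he_norm] at h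
  simpa using h

lemma sum_range_inv_sq_le {a h : ℝ} (ha : 0 < a) (hh : 0 < h) (M : ℕ) :
    ∑ i ∈ Finset.range M, ((a + i * h) ^ 2)⁻¹ ≤ (a ^ 2)⁻¹ + (a * h)⁻¹ := by
  have hpos : ∀ i : ℕ, 0 < a + i * h := fun i => by positivity
  -- comparison with the telescoping sum of `h⁻¹ ((a + i h)⁻¹ - (a + (i + 1) h)⁻¹)`
  have hstep : ∀ i : ℕ, ((a + (i + 1 : ℕ) * h) ^ 2)⁻¹
      ≤ h⁻¹ * ((a + i * h)⁻¹ - (a + (i + 1 : ℕ) * h)⁻¹) := by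
    intro i
    have h0 := hpos i
    have h1 := hpos (i + 1)
    rw [inv_sub_inv h0.ne' h1.ne']
    push_cast at h1 ⊢
    rw [show a + (i + 1) * h - (a + i * h) = h by ring, ← div_eq_inv_mul,
      div_div_cancel_left' hh.ne', inv_le_inv₀ (by positivity) (by positivity)]
    nlinarith
  cases M with
  | zero => simp only [Finset.range_zero, Finset.sum_empty]; positivity
  | succ M =>
    rw [Finset.sum_range_succ']
    calc ∑ i ∈ Finset.range M, ((a + (i + 1 : ℕ) * h) ^ 2)⁻¹ + ((a + (0 : ℕ) * h) ^ 2)⁻¹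
        ≤ ∑ i ∈ Finset.range M, h⁻¹ * ((a + i * h)⁻¹ - (a + (i + 1 : ℕ) * h)⁻¹)
            + (a ^ 2)⁻¹ := by
          gcongr with i
          · exact hstep i
          · simp
      _ = h⁻¹ * (a⁻¹ - (a + M * h)⁻¹) + (a ^ 2)⁻¹ := by
          rw [← Finset.mul_sum, Finset.sum_range_sub' (fun i : ℕ => (a + i * h)⁻¹)]
          simp
      _ ≤ (a ^ 2)⁻¹ + (a * h)⁻¹ := by
          have := (hpos M).le
          rw [mul_inv, mul_comm a⁻¹]
          nlinarith [inv_nonneg.mpr this, inv_nonneg.mpr hh.le]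

lemma tsum_le_of_le_inv_sq {f : ℕ → ℝ} {a h C : ℝ} (ha : 0 < a) (hh : 0 < h) (hC : 0 ≤ C)
    (hf0 : ∀ n, 0 ≤ f n) (hf : ∀ n, f n ≤ C * ((a + n * h) ^ 2)⁻¹) :
    ∑' n, f n ≤ C * ((a ^ 2)⁻¹ + (a * h)⁻¹) :=
  Real.tsum_le_of_sum_range_le hf0 fun M =>
    calc ∑ n ∈ Finset.range M, f n ≤ ∑ n ∈ Finset.range M, C * ((a + n * h) ^ 2)⁻¹ :=
          Finset.sum_le_sum fun n _ => hf n
      _ ≤ _ := by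
          rw [← Finset.mul_sum]
          exact mul_le_mul_of_nonneg_left (sum_range_inv_sq_le ha hh M) hC

lemma tsum_int_eq_tsum_add_nat_add_tsum_sub_nat {E : Type*} [NormedAddCommGroup E]
    [CompleteSpace E] {f : ℤ → E} (hf : Summable f) (k : ℤ) :
    ∑' j, f j = ∑' n : ℕ, f (k + n) + ∑' n : ℕ, f (k - 1 - n) := by
  set g : ℤ → E := fun j => f (k + j)
  have hg : Summable g := (Equiv.addLeft k).summable_iff.mpr hf
  have hneg : Function.Injective fun n : ℕ => -((n : ℤ) + 1) := fun m n h => by simpa using h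
  calc ∑' j, f j = ∑' j, g j := ((Equiv.addLeft k).tsum_eq f).symm
    _ = ∑' n : ℕ, g n + ∑' n : ℕ, g (-(n + 1)) :=
        tsum_of_nat_of_neg_add_one (hg.comp_injective Nat.cast_injective) (hg.comp_injective hneg)
    _ = _ := by
        congr 2 with n
        exact congrArg f (by ring)

lemma add_mul_le_of_forall_add_le {lam : ℤ → ℝ} {N : ℕ} {d : ℝ}
    (h : ∀ j, lam j + d ≤ lam (j + N)) (m : ℕ) (j : ℤ) :
    lam j + m * d ≤ lam (j + (m * N : ℕ)) := by
  induction m with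
  | zero => simp
  | succ m ih =>
    have := h (j + (m * N : ℕ))
    rw [add_assoc, ← Nat.cast_add, ← Nat.succ_mul] at this
    push_cast at ih this ⊢
    linarith

lemma add_div_sub_one_mul_le {lam : ℤ → ℝ} {N : ℕ} {d : ℝ} (hmono : Monotone lam)
    (hd : 0 ≤ d) (h : ∀ j, lam j + d ≤ lam (j + N)) (j : ℤ) (n : ℕ) :
    lam j + ((n : ℝ) / N - 1) * d ≤ lam (j + n) := by
  have hq : (n : ℝ) / N - 1 ≤ (n / N : ℕ) := by
    have := Nat.lt_floor_add_one ((n : ℝ) / N)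
    rw [Nat.floor_div_eq_div] at this
    linarith
  calc lam j + ((n : ℝ) / N - 1) * d ≤ lam j + (n / N : ℕ) * d := by gcongr
    _ ≤ lam (j + (n / N * N : ℕ)) := add_mul_le_of_forall_add_le h _ j
    _ ≤ lam (j + n) := hmono (by have := Nat.div_mul_le_self n N; omega)

lemma le_pi_sq_add_one_of_mul_le {A N u : ℝ} (hA : 1 ≤ A) (hN : N < A * π ^ 2 / 4 + 1)
    (hu : 0 < u) (h : A * π ^ 2 / 2 ≤ 4 / u ^ 2 + 4 * N / u) : u ≤ π ^ 2 + 1 := by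
  by_contra! hlt
  have hπ : 9 < π ^ 2 := by nlinarith [pi_gt_three]
  have h' : A * π ^ 2 * u ^ 2 ≤ 8 + 8 * N * u := by
    have := mul_le_mul_of_nonneg_right h (by positivity : (0 : ℝ) ≤ 2 * u ^ 2)
    field_simp at this
    nlinarith
  nlinarith [mul_le_mul_of_nonneg_right hN.le hu.le,
    mul_le_mul_of_nonneg_right hA (by positivity : (0 : ℝ) ≤ π ^ 2 * u)]

lemma gmax_le_iSup_gap {lam : ℤ → ℝ} (hmono : Monotone lam)
    (hbdd : BddAbove (range fun k => lam k - lam (k - 1))) :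
    gmax lam ≤ ⨆ k : ℤ, (lam k - lam (k - 1)) := by
  refine Real.sSup_le (fun c ⟨_, hc⟩ => ?_) ?_
  · obtain ⟨k, hk⟩ := hc.nonempty
    exact hk.le.trans (le_ciSup hbdd k)
  · exact (sub_nonneg.mpr (hmono (by omega))).trans (le_ciSup hbdd 0)

section SincSqSum

variable {lam : ℤ → ℝ} {A : ℝ} (hA : 0 < A) (hsum : ∀ μ, ∑' k, sinc (π * (μ - lam k)) ^ 2 = A)
include hA hsum

lemma summable_sinc_sq (μ : ℝ) : Summable fun k => sinc (π * (μ - lam k)) ^ 2 := by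
  by_contra h
  linarith [hsum μ, tsum_eq_zero_of_not_summable h]

lemma one_le_of_tsum_sinc_sq : 1 ≤ A := by
  have := (summable_sinc_sq hA hsum (lam 0)).le_tsum 0 fun _ _ => sq_nonneg _
  rwa [sub_self, mul_zero, sinc_zero, one_pow, hsum] at this

lemma add_half_lt_of_tsum_sinc_sq (hmono : Monotone lam) (j : ℤ) :
    lam j + 1 / 2 < lam (j + ⌈A * π ^ 2 / 4⌉₊) := by
  set N := ⌈A * π ^ 2 / 4⌉₊
  by_contra! hclose
  have hnear : ∀ i ∈ Finset.Icc j (j + N), 4 / π ^ 2 ≤ sinc (π * (lam j - lam i)) ^ 2 := by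
    intro i hi
    obtain ⟨hji, hiN⟩ := Finset.mem_Icc.mp hi
    have hdist : |π * (lam j - lam i)| ≤ π / 2 := by
      rw [abs_mul, abs_of_pos pi_pos, abs_sub_comm, abs_of_nonneg (sub_nonneg.mpr (hmono hji))]
      nlinarith [hmono hiN, pi_pos]
    calc 4 / π ^ 2 = (2 / π) ^ 2 := by ring
      _ ≤ _ := by gcongr; exact two_div_pi_le_sinc hdist
  have hcard : (Finset.Icc j (j + N)).card = N + 1 := by simp; omega
  have hlower := (Finset.Icc j (j + N)).card_nsmul_le_sum _ _ hnear
  rw [hcard, nsmul_eq_mul] at hlower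
  have hupper := (summable_sinc_sq hA hsum (lam j)).sum_le_tsum (Finset.Icc j (j + N))
    fun _ _ => sq_nonneg _
  rw [hsum] at hupper
  have hN : A * π ^ 2 / 4 ≤ N := Nat.le_ceil _
  have hπ : 0 < π ^ 2 := by positivity
  push_cast at hlower
  have : ((N : ℝ) + 1) * (4 / π ^ 2) * π ^ 2 = 4 * (N + 1) := by field_simp
  nlinarith [mul_le_mul_of_nonneg_right (hlower.trans hupper) hπ.le]

lemma mul_pi_sq_div_two_le_of_tsum_sinc_sq (hmono : Monotone lam) (k : ℤ)
    (hg : 1 < lam k - lam (k - 1)) :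
    A * π ^ 2 / 2 ≤ 4 / (lam k - lam (k - 1) - 1) ^ 2
      + 4 * ⌈A * π ^ 2 / 4⌉₊ / (lam k - lam (k - 1) - 1) := by
  set N := ⌈A * π ^ 2 / 4⌉₊
  set c := (lam k + lam (k - 1)) / 2
  set a := (lam k - lam (k - 1) - 1) / 2
  set h := 1 / (2 * (N : ℝ))
  have ha : 0 < a := by simp only [a]; linarith
  have hN : (0 : ℝ) < N := by simp only [N]; exact_mod_cast Nat.ceil_pos.mpr (by positivity)
  have hh : 0 < h := by positivity
  have hwin : ∀ j, lam j + 1 / 2 ≤ lam (j + N) := fun j =>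
    (add_half_lt_of_tsum_sinc_sq hA hsum hmono j).le
  -- the `n`-th point on either side of the gap is at distance at least `a + n h` from `c`
  have hdist : ∀ n : ℕ, a + n * h = (lam k - c) + ((n : ℝ) / N - 1) * (1 / 2) := by
    intro n; simp only [a, c, h]; field_simp; ring
  have hright : ∀ n : ℕ,
      sinc (π * (c - lam (k + n))) ^ 2 ≤ (π ^ 2)⁻¹ * ((a + n * h) ^ 2)⁻¹ := by
    intro n
    refine sinc_sq_pi_mul_le (by positivity) ?_
    rw [abs_sub_comm, hdist]
    have := add_div_sub_one_mul_le hmono (by norm_num) hwin k n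
    exact (by linarith : _ ≤ lam (k + n) - c).trans (le_abs_self _)
  have hleft : ∀ n : ℕ,
      sinc (π * (c - lam (k - 1 - n))) ^ 2 ≤ (π ^ 2)⁻¹ * ((a + n * h) ^ 2)⁻¹ := by
    intro n
    refine sinc_sq_pi_mul_le (by positivity) ?_
    rw [hdist]
    have := add_div_sub_one_mul_le hmono (by norm_num) hwin (k - 1 - n) n
    rw [sub_add_cancel] at this
    exact (by simp only [c]; linarith : _ ≤ c - lam (k - 1 - n)).trans (le_abs_self _)
  have hbound : A ≤ 2 * ((π ^ 2)⁻¹ * ((a ^ 2)⁻¹ + (a * h)⁻¹)) := by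
    rw [← hsum c, tsum_int_eq_tsum_add_nat_add_tsum_sub_nat (summable_sinc_sq hA hsum c) k,
      two_mul]
    have hC : (0 : ℝ) ≤ (π ^ 2)⁻¹ := by positivity
    exact add_le_add (tsum_le_of_le_inv_sq ha hh hC (fun _ => sq_nonneg _) hright)
      (tsum_le_of_le_inv_sq ha hh hC (fun _ => sq_nonneg _) hleft)
  have hform : (a ^ 2)⁻¹ + (a * h)⁻¹ = 4 / (lam k - lam (k - 1) - 1) ^ 2
      + 4 * N / (lam k - lam (k - 1) - 1) := by
    simp only [a, h]; field_simp; ring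
  rw [← hform]
  calc A * π ^ 2 / 2 ≤ 2 * ((π ^ 2)⁻¹ * ((a ^ 2)⁻¹ + (a * h)⁻¹)) * π ^ 2 / 2 := by gcongr
    _ = _ := by field_simp

lemma gap_le_pi_sq_add_two_of_tsum_sinc_sq (hmono : Monotone lam) (k : ℤ) :
    lam k - lam (k - 1) ≤ π ^ 2 + 2 := by
  by_cases hg : lam k - lam (k - 1) ≤ 1
  · linarith [sq_nonneg π]
  have := le_pi_sq_add_one_of_mul_le (one_le_of_tsum_sinc_sq hA hsum)
    (Nat.ceil_lt_add_one (by positivity)) (by linarith)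
    (mul_pi_sq_div_two_le_of_tsum_sinc_sq hA hsum hmono k (not_le.mp hg))
  linarith

end SincSqSum

theorem stmt9 (lam : ℤ → ℝ) (hmono : StrictMono lam) (A : ℝ) (hA : 0 < A)
    (htight : ∀ f : ℝ → ℂ, MemLp f 2 (volume.restrict (Icc (0 : ℝ) 1)) →
      (∑' k : ℤ,
          ‖∫ x in Icc (0 : ℝ) 1, f x * Complex.exp ((-2 * π * lam k * x : ℝ) * Complex.I)‖ ^ 2)
        = A * ∫ x in Icc (0 : ℝ) 1, ‖f x‖ ^ 2) :
    gmax lam ≤ (⨆ k : ℤ, (lam k - lam (k - 1))) ∧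
      ∀ k : ℤ, lam k - lam (k - 1) ≤ π ^ 2 + 2 := by
  have hgap := gap_le_pi_sq_add_two_of_tsum_sinc_sq hA (tsum_sinc_sq_eq_of_tight htight)
    hmono.monotone
  exact ⟨gmax_le_iSup_gap hmono.monotone ⟨_, forall_mem_range.mpr hgap⟩, hgap⟩
end

section
/- For all ξ₁, ξ₂ ∈ ℝ, ∑_{n∈ℤ} [sin π(ξ₁+n)/(π(ξ₁+n))] · [sin π(ξ₂+n)/(π(ξ₂+n))] = sin((ξ₂−ξ₁)π)/((ξ₂−ξ₁)π), where the normalized sinc value sin(πx)/(πx) is interpreted as 1 when the argument x is 0 (in particular the right-hand side equals 1 when ξ₁ = ξ₂). -/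
/-!
Let `e_ξ` be the function `x ↦ exp(2πiξx)` on `(-1/2, 1/2]`, viewed as a function on the unit
circle. Its `n`-th Fourier coefficient is `∫_{-1/2}^{1/2} exp(2πi(ξ - n)x) dx = nsinc (ξ - n)`, and
`conj (e_ξ₁) * e_ξ₂ = e_{ξ₂ - ξ₁}` has integral `nsinc (ξ₂ - ξ₁)`. Parseval's identity
`⟪e_ξ₁, e_ξ₂⟫ = ∑ₙ conj (ê_ξ₁ n) * ê_ξ₂ n` is then the claim, after the substitution `n ↦ -n`.
-/

open scoped Real

/-- Normalized sinc: `sin(πx)/(πx)`, interpreted as `1` at `x = 0`. -/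
noncomputable def nsinc (x : ℝ) : ℝ := if x = 0 then 1 else Real.sin (π * x) / (π * x)

open scoped ComplexConjugate
open MeasureTheory AddCircle Complex

theorem hasSum_conj_fourierCoeff_mul_fourierCoeff {T : ℝ} [Fact (0 < T)] {f g : AddCircle T → ℂ}
    (hf : MemLp f 2 haarAddCircle) (hg : MemLp g 2 haarAddCircle) :
    HasSum (fun n ↦ conj (fourierCoeff f n) * fourierCoeff g n)
      (∫ t, conj (f t) * g t ∂haarAddCircle) := by
  have h := fourierBasis.hasSum_inner_mul_inner (hf.toLp f) (hg.toLp g)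
  simp only [← inner_conj_symm (hf.toLp f) (fourierBasis _), ← HilbertBasis.repr_apply_apply,
    fourierBasis_repr, fourierCoeff_congr_ae hf.coeFn_toLp, fourierCoeff_congr_ae hg.coeFn_toLp] at h
  rwa [L2.inner_def, integral_congr_ae (g := fun t ↦ conj (f t) * g t)] at h
  filter_upwards [hf.coeFn_toLp, hg.coeFn_toLp] with t hft hgt
  rw [hft, hgt, RCLike.inner_apply, mul_comm]

theorem integral_cexp_two_pi_I_mul (c : ℝ) :
    ∫ x in (-(1/2) : ℝ)..1/2, cexp (2 * π * I * c * x) = nsinc c := by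
  rcases eq_or_ne c 0 with rfl | hc
  · norm_num [nsinc]
  have hπc : (π : ℂ) * c ≠ 0 := by exact_mod_cast mul_ne_zero Real.pi_ne_zero hc
  have h2πc : 2 * π * I * c ≠ 0 := by simpa [mul_comm, mul_assoc, I_ne_zero] using hπc
  rw [integral_exp_mul_complex h2πc, nsinc, if_neg hc]
  push_cast
  rw [show 2 * π * I * c * (1 / 2 : ℂ) = (π * c) * I by ring,
    show 2 * π * I * c * (-(1 / 2) : ℂ) = (-(π * c)) * I by ring, exp_mul_I, exp_mul_I,
    Complex.sin_neg, Complex.cos_neg]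
  field_simp
  ring

noncomputable def expIoc (ξ : ℝ) : UnitAddCircle → ℂ :=
  liftIoc 1 (-(1/2)) fun x ↦ cexp (2 * π * I * ξ * x)

theorem expIoc_apply (ξ : ℝ) (t : UnitAddCircle) :
    expIoc ξ t = cexp (2 * π * I * ξ * (equivIoc 1 (-(1/2)) t : ℝ)) := rfl

theorem expIoc_mul_expIoc (a b : ℝ) (t : UnitAddCircle) :
    expIoc a t * expIoc b t = expIoc (a + b) t := by
  simp only [expIoc_apply, ← Complex.exp_add]
  push_cast
  ring_nf

theorem conj_expIoc (a : ℝ) (t : UnitAddCircle) : conj (expIoc a t) = expIoc (-a) t := by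
  simp only [expIoc_apply, ← Complex.exp_conj, map_mul, conj_I, conj_ofReal, map_ofNat]
  push_cast
  ring_nf

theorem fourier_eq_expIoc (n : ℤ) (t : UnitAddCircle) : fourier n t = expIoc n t := by
  conv_lhs => rw [← coe_equivIoc (a := -(1/2)) (y := t)]
  rw [fourier_coe_apply, expIoc_apply]
  push_cast
  rw [div_one]

theorem integral_expIoc (ξ : ℝ) : ∫ t, expIoc ξ t ∂haarAddCircle = nsinc ξ := by
  rw [integral_haarAddCircle, expIoc, integral_liftIoc_eq_intervalIntegral]
  norm_num [integral_cexp_two_pi_I_mul]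

theorem fourierCoeff_expIoc (ξ : ℝ) (n : ℤ) : fourierCoeff (expIoc ξ) n = nsinc (ξ - n) := by
  simp only [fourierCoeff, smul_eq_mul, fourier_eq_expIoc, expIoc_mul_expIoc]
  rw [← integral_expIoc]
  push_cast
  ring_nf

theorem memLp_expIoc (ξ : ℝ) : MemLp (expIoc ξ) 2 haarAddCircle := by
  refine memLp_haarAddCircle_iff.2 (MemLp.memLp_liftIoc ?_)
  refine .of_bound (by fun_prop : Continuous _).aestronglyMeasurable 1 (ae_of_all _ fun x ↦ ?_)
  simp [norm_exp]

theorem stmt15 (ξ₁ ξ₂ : ℝ) :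
    ∑' n : ℤ, nsinc (ξ₁ + n) * nsinc (ξ₂ + n) = nsinc (ξ₂ - ξ₁) := by
  have h := hasSum_conj_fourierCoeff_mul_fourierCoeff (memLp_expIoc ξ₁) (memLp_expIoc ξ₂)
  simp only [fourierCoeff_expIoc, conj_ofReal, conj_expIoc, expIoc_mul_expIoc, integral_expIoc,
    neg_add_eq_sub, ← ofReal_mul, hasSum_ofReal] at h
  rw [← (Equiv.neg ℤ).hasSum_iff] at h
  simpa only [Function.comp_def, Equiv.neg_apply, Int.cast_neg, sub_neg_eq_add] using h.tsum_eq
end
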